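/- Let d ≥ 1, q ≥ 0 integers, and for t > d/2 define M_q^t(m) = Σ_{β∈ℤ^d, β≠0} |2^q β|^{-2t} when m = 0, and M_q^t(m) = Σ_{β∈ℤ^d} |m + 2^q β|^{-2t} otherwise, for m in the box B_q^d = [-2^{q-1}, 2^{q-1}-1]^d. Then for every δ > 0 there exists a constant C = C(d,δ) ≥ 1 such that for all t ∈ [d/2 + δ, 1/δ] and all q ≥ 0: (i) C^{-1} 2^{-2qt} ≤ M_q^t(0) ≤ C 2^{-2qt}; (ii) for all m ∈ B_q^d with m ≠ 0, C^{-1} |m|^{-2t} ≤ M_q^t(m) ≤ C |m|^{-2t}. -/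

import Mathlib

/-!
Put `s = 2t` and `Z(s) = ∑_{γ ∈ ℤ^d} |γ|^{-s}`, a lattice `p`-series that converges for `s > d`
and decreases in `s`, so that `1 ≤ Z(2t) ≤ Z(d + 2δ)` for all admissible `t`. Homogeneity gives
`M_q^t(0) = 2^{-qs} Z(s)`, and the term `β = 0` gives `M_q^t(m) ≥ |m|^{-s}`. For `m` in the box,
`|m_i| ≤ 2^{q-1}` forces `|m_i + 2^q β_i| ≥ 2^{q-1} |β_i|`, so the terms `β ≠ 0` add at most
`2^{-(q-1)s} Z(s)`, which is at most `d^t |m|^{-s} Z(s)` because `|m| ≤ √d 2^{q-1}`.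
For `q = 0` the natural-number exponent `q - 1` is `0` and this fails, but then
`M_0^t(m) = Z(s)` by translation invariance.
-/

open scoped BigOperators

/-- Euclidean norm of a lattice point `m ∈ ℤ^d`. -/
noncomputable def enorm {d : ℕ} (m : Fin d → ℤ) : ℝ :=
  Real.sqrt (∑ i, ((m i : ℝ))^2)

/-- `M_q^t(m) = Σ_{β ∈ ℤ^d} |m + 2^q β|^{-2t}`; terms with `m + 2^q β = 0` vanish
since `0^{-2t} = 0` for the real power with `-2t ≠ 0`, which encodes the omission
of the `β`-term producing `0` in the definition from the paper. -/
noncomputable def Mq (d q : ℕ) (t : ℝ) (m : Fin d → ℤ) : ℝ :=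
  ∑' β : Fin d → ℤ, _root_.enorm (fun i => m i + 2^q * β i) ^ (-(2*t))

/-- The box `B_q^d = [-2^{q-1}, 2^{q-1}-1]^d ⊂ ℤ^d`. -/
noncomputable def Bqset (d q : ℕ) : Finset (Fin d → ℤ) :=
  Fintype.piFinset (fun _ => Finset.Icc (-(2:ℤ)^(q-1)) ((2:ℤ)^(q-1) - 1))

open Finset

section EuclideanNorm

variable {d : ℕ}

lemma enorm_nonneg (m : Fin d → ℤ) : 0 ≤ _root_.enorm m := Real.sqrt_nonneg _

lemma enorm_mono {a b : Fin d → ℤ} (h : ∀ i, |a i| ≤ |b i|) :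
    _root_.enorm a ≤ _root_.enorm b :=
  Real.sqrt_le_sqrt <| sum_le_sum fun i _ => sq_le_sq.mpr (by exact_mod_cast h i)

lemma enorm_const_mul (c : ℤ) (m : Fin d → ℤ) :
    _root_.enorm (fun i => c * m i) = |(c : ℝ)| * _root_.enorm m := by
  rw [_root_.enorm, _root_.enorm, ← Real.sqrt_sq_eq_abs, ← Real.sqrt_mul (sq_nonneg _), mul_sum]
  simp only [Int.cast_mul, mul_pow]

lemma enorm_single (i : Fin d) : _root_.enorm (Pi.single i 1) = 1 := by
  simp [_root_.enorm, Pi.single_apply]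

lemma one_le_enorm {m : Fin d → ℤ} (hm : m ≠ 0) : 1 ≤ _root_.enorm m := by
  obtain ⟨i, hi⟩ := Function.ne_iff.mp hm
  rw [← enorm_single i]
  refine enorm_mono fun j => ?_
  rcases eq_or_ne j i with rfl | hj
  · simpa using Int.one_le_abs hi
  · simp [hj]

lemma enorm_le_sqrt_mul {m : Fin d → ℤ} {M : ℕ} (h : ∀ i, |m i| ≤ M) :
    _root_.enorm m ≤ √d * M := by
  calc _root_.enorm m ≤ _root_.enorm (fun _ => (M : ℤ)) := enorm_mono fun i => by simpa using h i
    _ = √d * M := by simp [_root_.enorm, Real.sqrt_mul, Real.sqrt_sq]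

end EuclideanNorm

/-- `Z(s)`; as in `Mq`, the term `γ = 0` is `0 ^ (-s) = 0` for `s ≠ 0`. -/
noncomputable def latticeZeta (d : ℕ) (s : ℝ) : ℝ :=
  ∑' γ : Fin d → ℤ, _root_.enorm γ ^ (-s)

section LatticeZeta

variable {d : ℕ} {s : ℝ}

open Module Submodule in
lemma summable_enorm_rpow_neg (hs : (d : ℝ) < s) :
    Summable fun γ : Fin d → ℤ => _root_.enorm γ ^ (-s) := by
  let b := (EuclideanSpace.basisFun (Fin d) ℝ).toBasis
  let e := (b.restrictScalars ℤ).equivFun.symm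
  have hrank : finrank ℤ (span ℤ (Set.range b)) = d := by
    rw [ZLattice.rank ℝ]; simp
  have hnorm (m : Fin d → ℤ) : ‖(e m : EuclideanSpace ℝ (Fin d))‖ = _root_.enorm m := by
    simp only [e, Basis.equivFun_symm_apply, Submodule.coe_sum, Submodule.coe_smul,
      Basis.restrictScalars_apply]
    simp [_root_.enorm, EuclideanSpace.norm_eq, b, Pi.single_apply]
  refine (e.toEquiv.summable_iff.mpr
    (ZLattice.summable_norm_rpow _ (-s) (by rw [hrank]; linarith))).congr fun m => ?_
  simp [hnorm]

lemma enorm_rpow_neg_anti {s₀ : ℝ} (hs₀ : 0 < s₀) (h : s₀ ≤ s) (γ : Fin d → ℤ) :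
    _root_.enorm γ ^ (-s) ≤ _root_.enorm γ ^ (-s₀) := by
  rcases eq_or_ne γ 0 with rfl | hγ
  · simp [_root_.enorm, Real.zero_rpow, hs₀.ne', (hs₀.trans_le h).ne']
  · exact Real.rpow_le_rpow_of_exponent_le (one_le_enorm hγ) (neg_le_neg h)

lemma latticeZeta_le_of_le {s₀ : ℝ} (hs₀ : (d : ℝ) < s₀) (h : s₀ ≤ s) :
    latticeZeta d s ≤ latticeZeta d s₀ :=
  have hs₀' : 0 < s₀ := (Nat.cast_nonneg d).trans_lt hs₀
  (summable_enorm_rpow_neg (hs₀.trans_le h)).tsum_le_tsum (enorm_rpow_neg_anti hs₀' h)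
    (summable_enorm_rpow_neg hs₀)

lemma one_le_latticeZeta (hd : 1 ≤ d) (hs : (d : ℝ) < s) : 1 ≤ latticeZeta d s := by
  have hterm := (summable_enorm_rpow_neg hs).le_tsum (Pi.single ⟨0, hd⟩ 1)
    fun γ _ => Real.rpow_nonneg (enorm_nonneg γ) _
  rwa [enorm_single, Real.one_rpow] at hterm

end LatticeZeta

section Mq

variable {d q : ℕ} {t : ℝ}

lemma summable_Mq (ht : (d : ℝ) < 2 * t) (m : Fin d → ℤ) :
    Summable fun β : Fin d → ℤ => _root_.enorm (fun i => m i + 2 ^ q * β i) ^ (-(2 * t)) :=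
  (summable_enorm_rpow_neg ht).comp_injective fun a b h =>
    funext fun i => by simpa using congrFun h i

lemma Mq_at_zero (d q : ℕ) (t : ℝ) :
    Mq d q t 0 = (2 : ℝ) ^ (-(2 * (q : ℝ) * t)) * latticeZeta d (2 * t) := by
  have hscale : (2 : ℝ) ^ (-(2 * (q : ℝ) * t)) = ((2 : ℝ) ^ q) ^ (-(2 * t)) := by
    rw [← Real.rpow_natCast_mul zero_le_two]; ring_nf
  rw [Mq, latticeZeta, hscale, ← tsum_mul_left]
  refine tsum_congr fun β => ?_
  have := enorm_const_mul (2 ^ q) β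
  simp only [Pi.zero_apply, zero_add, Int.cast_pow, Int.cast_ofNat] at this ⊢
  rw [this, abs_of_pos (by positivity), Real.mul_rpow (by positivity) (enorm_nonneg β)]

lemma Mq_of_q_eq_zero (t : ℝ) (m : Fin d → ℤ) : Mq d 0 t m = latticeZeta d (2 * t) := by
  rw [Mq, latticeZeta, ← (Equiv.addLeft m).tsum_eq (fun γ => _root_.enorm γ ^ (-(2 * t)))]
  simp only [pow_zero, one_mul]
  rfl

lemma enorm_rpow_le_Mq (ht : (d : ℝ) < 2 * t) (m : Fin d → ℤ) :
    _root_.enorm m ^ (-(2 * t)) ≤ Mq d q t m := by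
  have hterm := (summable_Mq (q := q) ht m).le_tsum 0
    fun β _ => Real.rpow_nonneg (enorm_nonneg _) _
  simp only [Pi.zero_apply, mul_zero, add_zero] at hterm
  exact hterm

end Mq

section Box

variable {d q : ℕ} {t : ℝ}

lemma abs_le_abs_add_two_mul {m a b : ℤ} (hm : |m| ≤ a) : a * |b| ≤ |m + 2 * a * b| := by
  have ha : 0 ≤ a := (abs_nonneg m).trans hm
  rcases eq_or_ne b 0 with rfl | hb
  · simp
  have htri : |2 * a * b| ≤ |m + 2 * a * b| + |m| := by
    simpa using abs_sub (m + 2 * a * b) m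
  rw [abs_mul, abs_mul, abs_two, abs_of_nonneg ha] at htri
  nlinarith [Int.one_le_abs hb]

lemma mul_enorm_le_enorm_add_two_mul {m : Fin d → ℤ} {a : ℕ} (hm : ∀ i, |m i| ≤ a)
    (β : Fin d → ℤ) : a * _root_.enorm β ≤ _root_.enorm (fun i => m i + 2 * a * β i) := by
  calc (a : ℝ) * _root_.enorm β = _root_.enorm (fun i => a * β i) := by
        rw [enorm_const_mul]; simp
    _ ≤ _ := enorm_mono fun i => by
        rw [abs_mul, Nat.abs_cast]; exact abs_le_abs_add_two_mul (hm i)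

lemma abs_le_of_mem_Bqset {m : Fin d → ℤ} (hm : m ∈ Bqset d q) (i : Fin d) :
    |m i| ≤ (2 ^ (q - 1) : ℕ) := by
  obtain ⟨hlo, hhi⟩ := Finset.mem_Icc.mp (Fintype.mem_piFinset.mp hm i)
  push_cast
  exact abs_le.mpr ⟨hlo, by linarith⟩

lemma Mq_le_of_mem_Bqset (ht : (d : ℝ) < 2 * t) {m : Fin d → ℤ} (hm : m ∈ Bqset d q) :
    Mq d q t m ≤
      _root_.enorm m ^ (-(2 * t)) + ((2 : ℝ) ^ (q - 1)) ^ (-(2 * t)) * latticeZeta d (2 * t) := by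
  have ht0 : 0 < 2 * t := (Nat.cast_nonneg d).trans_lt ht
  rcases Nat.eq_zero_or_pos q with rfl | hq
  · rw [Mq_of_q_eq_zero]
    simpa using Real.rpow_nonneg (enorm_nonneg m) _
  have hq2 : (2 : ℤ) ^ q = 2 * 2 ^ (q - 1) := by
    rw [← pow_succ', Nat.sub_add_cancel hq]
  have hterm (β : Fin d → ℤ) :
      _root_.enorm (fun i => m i + 2 ^ q * β i) ^ (-(2 * t)) ≤
        (if β = 0 then _root_.enorm m ^ (-(2 * t)) else 0) +
          ((2 : ℝ) ^ (q - 1)) ^ (-(2 * t)) * _root_.enorm β ^ (-(2 * t)) := by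
    rcases eq_or_ne β 0 with rfl | hβ
    · simp [_root_.enorm, Real.zero_rpow, ht0.ne']
    rw [if_neg hβ, zero_add, ← Real.mul_rpow (by positivity) (enorm_nonneg β)]
    have hpos : 0 < (2 : ℝ) ^ (q - 1) * _root_.enorm β :=
      mul_pos (by positivity) (one_pos.trans_le (one_le_enorm hβ))
    refine Real.rpow_le_rpow_of_nonpos hpos ?_ (by linarith)
    simpa [hq2, mul_assoc] using mul_enorm_le_enorm_add_two_mul (abs_le_of_mem_Bqset hm) β
  calc Mq d q t m
      ≤ ∑' β, ((if β = 0 then _root_.enorm m ^ (-(2 * t)) else 0) +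
          ((2 : ℝ) ^ (q - 1)) ^ (-(2 * t)) * _root_.enorm β ^ (-(2 * t))) :=
        (summable_Mq ht m).tsum_le_tsum hterm
          ((hasSum_ite_eq _ _).summable.add ((summable_enorm_rpow_neg ht).mul_left _))
    _ = _ := by
        rw [Summable.tsum_add (hasSum_ite_eq _ _).summable
            ((summable_enorm_rpow_neg ht).mul_left _), tsum_ite_eq, tsum_mul_left, latticeZeta]

lemma two_pow_rpow_neg_le_of_mem_Bqset (ht : 0 ≤ t) {m : Fin d → ℤ} (hm : m ∈ Bqset d q)
    (hm0 : m ≠ 0) :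
    ((2 : ℝ) ^ (q - 1)) ^ (-(2 * t)) ≤ (d : ℝ) ^ t * _root_.enorm m ^ (-(2 * t)) := by
  have hx : 0 < _root_.enorm m := one_pos.trans_le (one_le_enorm hm0)
  have hxle : _root_.enorm m ≤ √d * (2 : ℝ) ^ (q - 1) := by
    simpa using enorm_le_sqrt_mul (abs_le_of_mem_Bqset hm)
  have hsd : 0 < √d := pos_of_mul_pos_left (hx.trans_le hxle) (by positivity)
  calc ((2 : ℝ) ^ (q - 1)) ^ (-(2 * t))
      = √d ^ (2 * t) * (√d * (2 : ℝ) ^ (q - 1)) ^ (-(2 * t)) := by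
        rw [Real.mul_rpow hsd.le (by positivity), ← mul_assoc, ← Real.rpow_add hsd,
          add_neg_cancel, Real.rpow_zero, one_mul]
    _ ≤ √d ^ (2 * t) * _root_.enorm m ^ (-(2 * t)) :=
        mul_le_mul_of_nonneg_left (Real.rpow_le_rpow_of_nonpos hx hxle (by linarith))
          (by positivity)
    _ = (d : ℝ) ^ t * _root_.enorm m ^ (-(2 * t)) := by
        rw [Real.rpow_mul hsd.le, Real.rpow_two, Real.sq_sqrt (Nat.cast_nonneg d)]

lemma Mq_le_mul_enorm_rpow_of_mem_Bqset (ht : (d : ℝ) < 2 * t) {m : Fin d → ℤ}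
    (hm : m ∈ Bqset d q) (hm0 : m ≠ 0) :
    Mq d q t m ≤ (1 + (d : ℝ) ^ t * latticeZeta d (2 * t)) * _root_.enorm m ^ (-(2 * t)) := by
  have ht0 : 0 ≤ t := by linarith [(Nat.cast_nonneg d : (0 : ℝ) ≤ d)]
  have hZ : 0 ≤ latticeZeta d (2 * t) :=
    tsum_nonneg fun γ => Real.rpow_nonneg (enorm_nonneg γ) _
  calc Mq d q t m
      ≤ _root_.enorm m ^ (-(2 * t)) + ((2 : ℝ) ^ (q - 1)) ^ (-(2 * t)) * latticeZeta d (2 * t) :=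
        Mq_le_of_mem_Bqset ht hm
    _ ≤ _root_.enorm m ^ (-(2 * t)) +
          (d : ℝ) ^ t * _root_.enorm m ^ (-(2 * t)) * latticeZeta d (2 * t) := by
        gcongr
        exact two_pow_rpow_neg_le_of_mem_Bqset ht0 hm hm0
    _ = _ := by ring

end Box

theorem stmt0 (d : ℕ) (hd : 1 ≤ d) (δ : ℝ) (hδ : 0 < δ) :
    ∃ C : ℝ, 1 ≤ C ∧
      ∀ t ∈ Set.Icc ((d:ℝ)/2 + δ) (1/δ), ∀ q : ℕ,
        (C⁻¹ * (2:ℝ) ^ (-(2*(q:ℝ)*t)) ≤ Mq d q t 0 ∧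
          Mq d q t 0 ≤ C * (2:ℝ) ^ (-(2*(q:ℝ)*t))) ∧
        ∀ m ∈ Bqset d q, m ≠ 0 →
          C⁻¹ * _root_.enorm m ^ (-(2*t)) ≤ Mq d q t m ∧
            Mq d q t m ≤ C * _root_.enorm m ^ (-(2*t)) := by
  set K := latticeZeta d (d + 2 * δ)
  have hK : 1 ≤ K := one_le_latticeZeta hd (by linarith)
  have hd' : (1 : ℝ) ≤ d := by exact_mod_cast hd
  have hdδ : (1 : ℝ) ≤ (d : ℝ) ^ (1 / δ) := Real.one_le_rpow hd' (by positivity)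
  set C := 1 + (d : ℝ) ^ (1 / δ) * K
  have hCinv : C⁻¹ ≤ 1 := inv_le_one_of_one_le₀ (by nlinarith)
  refine ⟨C, by nlinarith, ?_⟩
  rintro t ⟨ht₁, ht₂⟩ q
  have ht : (d : ℝ) < 2 * t := by linarith
  have hZ : 1 ≤ latticeZeta d (2 * t) := one_le_latticeZeta hd ht
  have hZK : latticeZeta d (2 * t) ≤ K := latticeZeta_le_of_le (by linarith) (by linarith)
  have hdt : (d : ℝ) ^ t ≤ (d : ℝ) ^ (1 / δ) := Real.rpow_le_rpow_of_exponent_le hd' ht₂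
  have hZC : latticeZeta d (2 * t) ≤ C := by nlinarith
  have hCt : 1 + (d : ℝ) ^ t * latticeZeta d (2 * t) ≤ C :=
    add_le_add_right (mul_le_mul hdt hZK (by linarith) (by linarith)) 1
  have hpow : 0 < (2 : ℝ) ^ (-(2 * (q : ℝ) * t)) := by positivity
  refine ⟨?_, fun m hm hm0 => ?_⟩
  · rw [Mq_at_zero]
    constructor <;> nlinarith
  · have hx : 0 ≤ _root_.enorm m ^ (-(2 * t)) := Real.rpow_nonneg (enorm_nonneg m) _
    constructor
    · calc C⁻¹ * _root_.enorm m ^ (-(2 * t)) ≤ _root_.enorm m ^ (-(2 * t)) :=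
            mul_le_of_le_one_left hx hCinv
        _ ≤ Mq d q t m := enorm_rpow_le_Mq ht m
    · exact (Mq_le_mul_enorm_rpow_of_mem_Bqset ht hm hm0).trans
        (mul_le_mul_of_nonneg_right hCt hx)
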